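/- arXiv:1006.5857 — 5 statements merged into one kernel-verified Lean document; each statement's English description precedes it below -/
import Mathlib

section
/- Let k be a natural number, let δ be a rational number and let u₀,…,u_k be rational numbers (extended by the convention u_t = 0 for t < 0). For each 0 ≤ m ≤ k set b_m := (1/2)·(δ² − Σ_{i=0}^{m} C(2m+1, m−i) · Σ_{j=0}^{k−m} C(k−m, j) · u_{i−j}), and set Δ := (1/2)·(4^k·δ² − Σ_{i=0}^{k} C(2k+1, k−i) · 2^{k−i} · u_i). Then Δ = Σ_{m=0}^{k} C(2k+1, k−m) · b_m. -/
/-!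
The inner double sum of `b_m` is the coefficient of `x^m` in
`(1+x)^(2m+1) · (1+x)^(k-m) · U(x) = (1+x)^(k+m+1) · U(x)` with `U(x) = Σ u_t x^t` (Vandermonde),
i.e. `Σ_t C(k+m+1, m-t) u_t`. Weighting by `C(2k+1, k-m)` and collecting the coefficient of `u_t`
gives `Σ_s C(2k+1, s) C(2k+1-s, k-t-s) = C(2k+1, k-t) 2^(k-t)` (trinomial revision), while the
`δ²` terms carry total weight `Σ_m C(2k+1, k-m) = 4^k`.
-/

open Finset

theorem Finset.Nat.sum_antidiagonal_antidiagonal_assoc {M : Type*} [AddCommMonoid M] (n : ℕ)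
    (f : ℕ → ℕ → ℕ → M) :
    ∑ p ∈ antidiagonal n, ∑ q ∈ antidiagonal p.1, f q.1 q.2 p.2 =
      ∑ p ∈ antidiagonal n, ∑ q ∈ antidiagonal p.2, f p.1 q.1 q.2 := by
  simp only [sum_sigma']
  refine sum_nbij' (fun x ↦ ⟨(x.2.1, x.2.2 + x.1.2), (x.2.2, x.1.2)⟩)
    (fun x ↦ ⟨(x.1.1 + x.2.1, x.2.2), (x.1.1, x.2.1)⟩) ?_ ?_ ?_ ?_ ?_ <;>
    aesop (add simp [add_assoc])

theorem Nat.choose_mul_sub_choose (n r s : ℕ) :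
    n.choose s * (n - s).choose r = n.choose (r + s) * (r + s).choose r := by
  rw [Nat.choose_symm_add, Nat.choose_mul (Nat.le_add_left s r), Nat.add_sub_cancel]

theorem Nat.sum_range_choose_sub_halfway (m : ℕ) :
    ∑ i ∈ range (m + 1), (2 * m + 1).choose (m - i) = 4 ^ m := by
  rw [← sum_range_reflect, ← Nat.sum_range_choose_halfway m]
  refine sum_congr rfl fun i hi ↦ ?_
  rw [mem_range] at hi
  rw [Nat.add_sub_cancel, Nat.sub_sub_self (by omega)]

theorem Finset.Nat.sum_antidiagonal_choose_fst (n : ℕ) :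
    ∑ p ∈ antidiagonal n, n.choose p.1 = 2 ^ n := by
  rw [Finset.Nat.sum_antidiagonal_eq_sum_range_succ (fun i _ ↦ n.choose i), Nat.sum_range_choose]

section

variable {R : Type*} [CommSemiring R]

theorem sum_range_choose_mul_shift_eq_sum_antidiagonal (b i : ℕ) {u : ℤ → R}
    (hu : ∀ t : ℤ, t < 0 → u t = 0) :
    ∑ j ∈ range (b + 1), (b.choose j : R) * u (i - j) =
      ∑ p ∈ antidiagonal i, (b.choose p.2 : R) * u p.1 := by
  have extend_b : ∑ j ∈ range (b + 1), (b.choose j : R) * u (i - j) =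
      ∑ j ∈ range (b + i + 1), (b.choose j : R) * u (i - j) := by
    refine sum_subset (range_subset_range.2 (by omega)) fun j _ hj ↦ ?_
    rw [Nat.choose_eq_zero_of_lt (by simpa using hj), Nat.cast_zero, zero_mul]
  have extend_i : ∑ j ∈ range (i + 1), (b.choose j : R) * u (i - j) =
      ∑ j ∈ range (b + i + 1), (b.choose j : R) * u (i - j) := by
    refine sum_subset (range_subset_range.2 (by omega)) fun j _ hj ↦ ?_
    rw [hu _ (by simp at hj; omega), mul_zero]
  calc ∑ j ∈ range (b + 1), (b.choose j : R) * u (i - j)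
      = ∑ j ∈ range (i + 1), (b.choose j : R) * u ↑(i - j) := by
        rw [extend_b, ← extend_i]
        refine sum_congr rfl fun j hj ↦ ?_
        rw [Nat.cast_sub (by simpa [Nat.lt_succ_iff] using hj)]
    _ = ∑ p ∈ antidiagonal i, (b.choose p.1 : R) * u p.2 :=
        (Finset.Nat.sum_antidiagonal_eq_sum_range_succ (fun j t ↦ (b.choose j : R) * u t) i).symm
    _ = ∑ p ∈ antidiagonal i, (b.choose p.2 : R) * u p.1 :=
        Finset.Nat.sum_antidiagonal_swap (f := fun p ↦ (b.choose p.2 : R) * u p.1)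

theorem sum_choose_mul_sum_choose_mul_shift (a b m : ℕ) {u : ℤ → R}
    (hu : ∀ t : ℤ, t < 0 → u t = 0) :
    ∑ i ∈ range (m + 1), (a.choose (m - i) : R) *
        ∑ j ∈ range (b + 1), (b.choose j : R) * u (i - j) =
      ∑ t ∈ range (m + 1), ((a + b).choose (m - t) : R) * u t := by
  simp only [sum_range_choose_mul_shift_eq_sum_antidiagonal b _ hu]
  rw [← Finset.Nat.sum_antidiagonal_eq_sum_range_succ
      (fun i p ↦ (a.choose p : R) * ∑ q ∈ antidiagonal i, (b.choose q.2 : R) * u q.1),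
    ← Finset.Nat.sum_antidiagonal_eq_sum_range_succ (fun t q ↦ ((a + b).choose q : R) * u t)]
  simp only [mul_sum]
  refine (Finset.Nat.sum_antidiagonal_antidiagonal_assoc m
    fun t j p ↦ (a.choose p : R) * ((b.choose j : R) * u t)).trans (sum_congr rfl fun p _ ↦ ?_)
  rw [add_comm, Nat.add_choose_eq, Nat.cast_sum, sum_mul]
  refine sum_congr rfl fun q _ ↦ ?_
  push_cast
  ring

theorem sum_choose_mul_sum_sub_choose_mul (n k : ℕ) (w : ℕ → R) :
    ∑ m ∈ range (k + 1), (n.choose (k - m) : R) *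
        ∑ t ∈ range (m + 1), ((n - (k - m)).choose (m - t) : R) * w t =
      ∑ t ∈ range (k + 1), (n.choose (k - t) : R) * 2 ^ (k - t) * w t := by
  have inner (m s : ℕ) : ∑ t ∈ range (m + 1), ((n - s).choose (m - t) : R) * w t =
      ∑ q ∈ antidiagonal m, ((n - s).choose q.2 : R) * w q.1 :=
    (Finset.Nat.sum_antidiagonal_eq_sum_range_succ (fun t r ↦ ((n - s).choose r : R) * w t) m).symm
  rw [← Finset.Nat.sum_antidiagonal_eq_sum_range_succ
      (fun m s ↦ (n.choose s : R) * ∑ t ∈ range (m + 1), ((n - s).choose (m - t) : R) * w t),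
    ← Finset.Nat.sum_antidiagonal_eq_sum_range_succ
      (fun t q ↦ (n.choose q : R) * 2 ^ q * w t)]
  simp only [inner, mul_sum]
  refine (Finset.Nat.sum_antidiagonal_antidiagonal_assoc k
    fun t r s ↦ (n.choose s : R) * ((n - s).choose r * w t)).trans (sum_congr rfl fun p _ ↦ ?_)
  have two_pow : (2 : R) ^ p.2 = ∑ q ∈ antidiagonal p.2, (p.2.choose q.1 : R) := by
    rw [← Nat.cast_sum, Finset.Nat.sum_antidiagonal_choose_fst, Nat.cast_pow, Nat.cast_ofNat]
  rw [two_pow, mul_sum, sum_mul]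
  refine sum_congr rfl fun q hq ↦ ?_
  rw [← mul_assoc, ← Nat.cast_mul, Nat.choose_mul_sub_choose, mem_antidiagonal.1 hq]
  push_cast
  ring

end

/-- The combinatorial core of the double-point formula for 2-Veronese
embeddings. `u : ℤ → ℚ` encodes the numbers `u₀,…,u_k`, extended by `u t = 0` for `t < 0`. -/
theorem veronese_double_point_identity (k : ℕ) (δ : ℚ) (u : ℤ → ℚ)
    (hu : ∀ t : ℤ, t < 0 → u t = 0) :
    (1/2 : ℚ) * ((4 : ℚ) ^ k * δ ^ 2 -
        ∑ i ∈ Finset.range (k + 1),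
          (Nat.choose (2 * k + 1) (k - i) : ℚ) * 2 ^ (k - i) * u i) =
      ∑ m ∈ Finset.range (k + 1),
        (Nat.choose (2 * k + 1) (k - m) : ℚ) *
          ((1/2 : ℚ) * (δ ^ 2 -
            ∑ i ∈ Finset.range (m + 1),
              (Nat.choose (2 * m + 1) (m - i) : ℚ) *
                ∑ j ∈ Finset.range (k - m + 1),
                  (Nat.choose (k - m) j : ℚ) * u ((i : ℤ) - (j : ℤ)))) := by
  have sum_weights : ∑ m ∈ range (k + 1), ((2 * k + 1).choose (k - m) : ℚ) = 4 ^ k := by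
    exact_mod_cast Nat.sum_range_choose_sub_halfway k
  rw [← sum_weights, ← sum_choose_mul_sum_sub_choose_mul (2 * k + 1) k (fun t ↦ u t), sum_mul,
    ← sum_sub_distrib, mul_sum]
  refine sum_congr rfl fun m hm ↦ ?_
  have hmk : 2 * m + 1 + (k - m) = 2 * k + 1 - (k - m) := by
    rw [mem_range] at hm
    omega
  rw [sum_choose_mul_sum_choose_mul_shift _ _ _ hu, hmk]
  ring
end

section
/- Let k be a natural number. Suppose a₀,…,a_k are rational numbers such that for every rational δ and all rationals u₀,…,u_k (extended by u_t = 0 for t < 0), one has (1/2)·(4^k·δ² − Σ_{i=0}^{k} C(2k+1, k−i) · 2^{k−i} · u_i) = Σ_{m=0}^{k} a_m · b_m, where b_m := (1/2)·(δ² − Σ_{i=0}^{m} C(2m+1, m−i) · Σ_{j=0}^{k−m} C(k−m, j) · u_{i−j}). Then a_m = C(2k+1, k−m) for every 0 ≤ m ≤ k. -/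
/-!
Taking `δ = 0` and `u` the indicator of some `s ≤ k` turns the identity into the linear system
`∑ₘ a m * M m s = C(2k+1, k-s) 2^(k-s)`, where by Vandermonde `M m s = C(k+m+1, m-s)` for
`s ≤ m` and `M m s = 0` for `m < s`. The system is triangular with unit diagonal, so it has at
most one solution, and trinomial revision
`C(2k+1, k-m) C(k+m+1, m-s) = C(2k+1, k-s) C(k-s, m-s)` together with
`∑ₜ C(k-s, t) = 2^(k-s)` shows that `a m = C(2k+1, k-m)` is one.
-/

open Finset

theorem sum_range_ite_le {M : Type*} [AddCommMonoid M] (f : ℕ → M) (n s : ℕ) :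
    ∑ i ∈ range n, (if s ≤ i then f i else 0) = ∑ t ∈ range (n - s), f (s + t) := by
  rcases le_total s n with hsn | hns
  · obtain ⟨r, rfl⟩ := Nat.exists_eq_add_of_le hsn
    rw [sum_range_add, add_tsub_cancel_left]
    simp +contextual [sum_ite_of_false]
  · rw [Nat.sub_eq_zero_of_le hns, sum_range_zero]
    exact sum_eq_zero fun i hi => if_neg (by simp at hi; omega)

theorem sum_choose_mul_indicator_sub {R : Type*} [Semiring R] (a i s : ℕ) :
    ∑ j ∈ range (a + 1), (a.choose j : R) * (if (i : ℤ) - j = s then 1 else 0) =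
      if s ≤ i then (a.choose (i - s) : R) else 0 := by
  split_ifs with hsi
  · have hiff : ∀ j : ℕ, (i : ℤ) - j = s ↔ j = i - s := fun j => by omega
    simp only [hiff, mul_ite, mul_one, mul_zero, sum_ite_eq', mem_range]
    split_ifs with hia
    · rfl
    · rw [Nat.choose_eq_zero_of_lt (by omega), Nat.cast_zero]
  · exact sum_eq_zero fun j _ => by rw [if_neg (by omega), mul_zero]

theorem sum_choose_mul_sum_choose_indicator_sub {R : Type*} [Semiring R] (a b c s : ℕ) :
    ∑ i ∈ range (c + 1), (b.choose (c - i) : R) *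
        ∑ j ∈ range (a + 1), (a.choose j : R) * (if (i : ℤ) - j = s then 1 else 0) =
      if s ≤ c then ((a + b).choose (c - s) : R) else 0 := by
  simp only [sum_choose_mul_indicator_sub]
  simp only [mul_ite, mul_zero, sum_range_ite_le, add_tsub_cancel_left]
  split_ifs with hsc
  · rw [Nat.add_choose_eq, Nat.sum_antidiagonal_eq_sum_range_succ_mk,
      show c + 1 - s = c - s + 1 by omega]
    push_cast
    exact sum_congr rfl fun t _ => by rw [Nat.sub_sub]; exact Nat.cast_comm _ _
  · rw [show c + 1 - s = 0 by omega, sum_range_zero]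

theorem choose_two_mul_add_one_mul_choose {k m s : ℕ} (hsm : s ≤ m) (hmk : m ≤ k) :
    (2 * k + 1).choose (k - m) * (k + m + 1).choose (m - s) =
      (2 * k + 1).choose (k - s) * (k - s).choose (m - s) := by
  have h := Nat.choose_mul (n := 2 * k + 1) (k := k + m + 1) (s := k + s + 1) (by omega)
  rwa [← Nat.choose_symm (by omega), ← Nat.choose_symm (n := k + m + 1) (by omega),
    ← Nat.choose_symm (n := 2 * k + 1) (k := k + s + 1) (by omega),
    show 2 * k + 1 - (k + m + 1) = k - m by omega, show k + m + 1 - (k + s + 1) = m - s by omega,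
    show 2 * k + 1 - (k + s + 1) = k - s by omega] at h

theorem sum_choose_two_mul_add_one_mul_ite_choose {R : Type*} [Semiring R] (k s : ℕ)
    (hs : s ≤ k) :
    ∑ m ∈ range (k + 1), ((2 * k + 1).choose (k - m) : R) *
        (if s ≤ m then ((k + m + 1).choose (m - s) : R) else 0) =
      ((2 * k + 1).choose (k - s) : R) * 2 ^ (k - s) := by
  have hterm : ∀ t ∈ range (k + 1 - s),
      ((2 * k + 1).choose (k - (s + t)) : R) * ((k + (s + t) + 1).choose (s + t - s) : R) =
        ((2 * k + 1).choose (k - s) : R) * ((k - s).choose t : R) := fun t ht => by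
    rw [mem_range] at ht
    rw [← Nat.cast_mul, ← Nat.cast_mul,
      choose_two_mul_add_one_mul_choose (Nat.le_add_right s t) (by omega), add_tsub_cancel_left]
  have hpow : (2 : R) ^ (k - s) = ∑ t ∈ range (k - s + 1), ((k - s).choose t : R) := by
    rw [← Nat.cast_sum, Nat.sum_range_choose, Nat.cast_pow, Nat.cast_ofNat]
  simp only [mul_ite, mul_zero, sum_range_ite_le]
  rw [sum_congr rfl hterm, show k + 1 - s = k - s + 1 by omega, hpow, mul_sum]

theorem eq_of_forall_sum_mul_eq_of_triangular {K : Type*} [Field K] (n : ℕ) (M : ℕ → ℕ → K)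
    (hM : ∀ m s, m < s → M m s = 0) (hdiag : ∀ s ≤ n, M s s ≠ 0) {f g : ℕ → K}
    (h : ∀ s ≤ n, ∑ m ∈ range (n + 1), f m * M m s = ∑ m ∈ range (n + 1), g m * M m s) :
    ∀ s ≤ n, f s = g s := by
  let A : Matrix (Fin (n + 1)) (Fin (n + 1)) K := Matrix.of fun m s => M m s
  have hA : IsUnit A := by
    rw [Matrix.isUnit_iff_isUnit_det,
      Matrix.det_of_isLowerTriangular A fun m s hsm => hM m s hsm]
    exact isUnit_iff_ne_zero.mpr
      (prod_ne_zero_iff.mpr fun s _ => hdiag s (Nat.lt_succ_iff.mp s.2))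
  have hvec : Matrix.vecMul (fun m : Fin (n + 1) => f m) A =
      Matrix.vecMul (fun m : Fin (n + 1) => g m) A := by
    funext s
    simpa [A, Matrix.vecMul, dotProduct, Fin.sum_univ_eq_sum_range (fun m => f m * M m s),
      Fin.sum_univ_eq_sum_range (fun m => g m * M m s)] using h s (Nat.lt_succ_iff.mp s.2)
  intro s hs
  exact congrFun (Matrix.vecMul_injective_of_isUnit hA hvec) ⟨s, Nat.lt_succ_iff.mpr hs⟩

/-- Uniqueness of the coefficients in the double-point formula. If rational
numbers `a₀,…,a_k` satisfy the double-point identity for every `δ` and every choice of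
`u₀,…,u_k` (extended by `u t = 0` for `t < 0`), then `a m = C(2k+1, k−m)`. -/
theorem veronese_double_point_coeff_unique (k : ℕ) (a : ℕ → ℚ)
    (ha : ∀ δ : ℚ, ∀ u : ℤ → ℚ, (∀ t : ℤ, t < 0 → u t = 0) →
      (1/2 : ℚ) * ((4 : ℚ) ^ k * δ ^ 2 -
          ∑ i ∈ Finset.range (k + 1),
            (Nat.choose (2 * k + 1) (k - i) : ℚ) * 2 ^ (k - i) * u i) =
        ∑ m ∈ Finset.range (k + 1),
          a m *
            ((1/2 : ℚ) * (δ ^ 2 -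
              ∑ i ∈ Finset.range (m + 1),
                (Nat.choose (2 * m + 1) (m - i) : ℚ) *
                  ∑ j ∈ Finset.range (k - m + 1),
                    (Nat.choose (k - m) j : ℚ) * u ((i : ℤ) - (j : ℤ))))) :
    ∀ m ≤ k, a m = (Nat.choose (2 * k + 1) (k - m) : ℚ) := by
  let M : ℕ → ℕ → ℚ := fun m s => if s ≤ m then ((k + m + 1).choose (m - s) : ℚ) else 0
  have hsys : ∀ s ≤ k, ∑ m ∈ range (k + 1), a m * M m s =
      ((2 * k + 1).choose (k - s) : ℚ) * 2 ^ (k - s) := by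
    intro s hs
    have h := ha 0 (fun t => if t = s then 1 else 0) fun t ht => if_neg (by omega)
    have hlhs : ∑ i ∈ range (k + 1), ((2 * k + 1).choose (k - i) : ℚ) * 2 ^ (k - i) *
        (if (i : ℤ) = s then 1 else 0) = ((2 * k + 1).choose (k - s) : ℚ) * 2 ^ (k - s) := by
      simp [hs]
    have hrhs : ∑ m ∈ range (k + 1), a m * ((1 / 2 : ℚ) * (0 ^ 2 -
        ∑ i ∈ range (m + 1), ((2 * m + 1).choose (m - i) : ℚ) *
          ∑ j ∈ range (k - m + 1),
            ((k - m).choose j : ℚ) * (if (i : ℤ) - j = s then 1 else 0))) =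
        -(1 / 2) * ∑ m ∈ range (k + 1), a m * M m s := by
      rw [mul_sum]
      refine sum_congr rfl fun m hm => ?_
      rw [sum_choose_mul_sum_choose_indicator_sub,
        show k - m + (2 * m + 1) = k + m + 1 by rw [mem_range] at hm; omega]
      ring
    rw [hlhs, hrhs] at h
    linarith
  refine eq_of_forall_sum_mul_eq_of_triangular k M (fun m s hms => if_neg (by omega))
    (fun s _ => by simp [M]) fun s hs => ?_
  rw [hsys s hs, ← sum_choose_two_mul_add_one_mul_ite_choose k s hs]
end

section
/- Let c, d, g be natural numbers with c ≥ 2 and d ≥ 1. Assume: (A) C(d, 2) = C(2c−1, c−1); (B) C(2c−1, c−2) ≤ C(d−1, 2) and g = C(d−1, 2) − C(2c−1, c−2); (C) 2·c·g ≤ (d−1)² + c·(d−1). Then either (d, c, g) = (3, 2, 0) or (d, c, g) = (5, 3, 1). -/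
set_option maxHeartbeats 800000

lemma cb_key : ∀ n, 4 ≤ n → ((3*n+5)*(n+3))^2 < (n+1)^2 * Nat.centralBinom (n+2) := by
  intro n hn
  induction n with
  | zero => omega
  | succ m ih =>
    rcases Nat.lt_or_ge m 4 with hm | hm
    · interval_cases m
      · omega
      · omega
      · omega
      · norm_num [Nat.centralBinom]
        decide
    · have IH := ih hm
      have hid := Nat.succ_mul_centralBinom_succ (m+2)
      have h3 : 3 * Nat.centralBinom (m+2) ≤ Nat.centralBinom (m+3) := by
        have : (m+3) * (3 * Nat.centralBinom (m+2)) ≤ (m+3) * Nat.centralBinom (m+3) := by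
          rw [hid]; ring_nf; nlinarith [Nat.centralBinom_pos (m+2)]
        exact Nat.le_of_mul_le_mul_left this (by omega)
      have hpoly : (m+1)^2 * ((3*(m+1)+5)*((m+1)+3))^2 ≤ 3 * (m+2)^2 * ((3*m+5)*(m+3))^2 := by
        nlinarith [hm, sq_nonneg m]
      have hstep : 3 * (m+2)^2 * ((3*m+5)*(m+3))^2 < 3 * (m+2)^2 * ((m+1)^2 * Nat.centralBinom (m+2)) :=
        mul_lt_mul_of_pos_left IH (by positivity)
      nlinarith [h3, IH, hpoly, hstep, Nat.centralBinom_pos (m+2)]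

/-- The arithmetic core of the classification theorem: the constraints (A),
(B), (C) force either `(d, c, g) = (3, 2, 0)` or `(d, c, g) = (5, 3, 1)`. -/
theorem classification_arithmetic (c d g : ℕ) (hc : 2 ≤ c) (hd : 1 ≤ d)
    (hA : Nat.choose d 2 = Nat.choose (2 * c - 1) (c - 1))
    (hB1 : Nat.choose (2 * c - 1) (c - 2) ≤ Nat.choose (d - 1) 2)
    (hB2 : g = Nat.choose (d - 1) 2 - Nat.choose (2 * c - 1) (c - 2))
    (hC : 2 * c * g ≤ (d - 1) ^ 2 + c * (d - 1)) :
    (d = 3 ∧ c = 2 ∧ g = 0) ∨ (d = 5 ∧ c = 3 ∧ g = 1) := by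
  obtain ⟨D, rfl⟩ : ∃ D, d = D + 1 := ⟨d - 1, by omega⟩
  obtain ⟨C, rfl⟩ : ∃ C, c = C + 2 := ⟨c - 2, by omega⟩
  rw [show 2 * (C+2) - 1 = 2*C+3 by omega, show (C+2) - 1 = C+1 by omega] at hA
  rw [show 2 * (C+2) - 1 = 2*C+3 by omega, show (C+2) - 2 = C by omega,
      show D + 1 - 1 = D by omega] at hB1 hB2
  rw [show D + 1 - 1 = D by omega] at hC
  set A := (2*C+3).choose (C+1) with hAdef
  set B := (2*C+3).choose C with hBdef
  -- relation between A and B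
  have f1 : A * (C+1) = B * (C+3) := by
    have h := Nat.choose_succ_right_eq (2*C+3) C
    rw [show 2*C+3 - C = C+3 by omega] at h
    exact h
  -- Pascal step
  have hp : (D+1).choose 2 = D.choose 1 + D.choose 2 := Nat.choose_succ_succ D 1
  rw [Nat.choose_one_right] at hp
  have f2 : D + (g + B) = A := by omega
  have f3 : D * (D + 1) = 2 * A := by
    have h2 := Nat.choose_two_right (D+1)
    rw [show D + 1 - 1 = D by omega] at h2
    obtain ⟨k, hk⟩ := Nat.even_mul_succ_self D
    have hcomm : (D+1) * D = D * (D+1) := Nat.mul_comm _ _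
    omega
  have f4 : 2 * (C+2) * g ≤ D^2 + (C+2) * D := hC
  -- the key inequality
  have hg : (C+3) * (g + D) = 2 * A := by
    have h2' : (C+3) * (D + (g + B)) = (C+3) * A := by rw [f2]
    linarith [f1, h2']
  have hg2 : 2*(C+2) * ((C+3)*(g+D)) = 2*(C+2) * (2*A) := by rw [hg]
  have h4' : (C+3) * (2*(C+2)*g) ≤ (C+3) * (D^2 + (C+2)*D) :=
    Nat.mul_le_mul_left _ f4
  have hd2 : (C+3) * (D^2 + D) = (C+3) * (2*A) := by
    rw [← f3]; ring
  have keyle : (2*C+2) * A ≤ (3*C+5) * ((C+3) * D) := by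
    linarith [h4', hg2, hd2]
  have hApos : 0 < A := Nat.choose_pos (by omega)
  have hD1 : 1 ≤ D := by
    rcases Nat.eq_zero_or_pos D with h | h
    · subst h; simp at f3; omega
    · exact h
  have k1 : ((C+1) * (D+1)) * D ≤ ((3*C+5) * (C+3)) * D := by nlinarith [keyle, f3]
  have k2 : (C+1) * (D+1) ≤ (3*C+5) * (C+3) := Nat.le_of_mul_le_mul_right k1 hD1
  rcases Nat.lt_or_ge C 4 with hC4 | hC4
  · -- small cases: C = 0, 1, 2, 3
    interval_cases C
    · have hAv : A = 3 := by rw [hAdef]; decide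
      have hBv : B = 1 := by rw [hBdef]; decide
      have hDle : D ≤ 14 := by omega
      interval_cases D <;> omega
    · have hAv : A = 10 := by rw [hAdef]; decide
      have hBv : B = 5 := by rw [hBdef]; decide
      have hDle : D ≤ 15 := by omega
      interval_cases D <;> omega
    · have hAv : A = 35 := by rw [hAdef]; decide
      have hDle : D ≤ 17 := by omega
      interval_cases D <;> omega
    · have hAv : A = 126 := by rw [hAdef]; decide
      have hDle : D ≤ 20 := by omega
      interval_cases D <;> omega
  · -- large case: contradiction
    exfalso
    have cb : Nat.centralBinom (C+2) = 2 * A := by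
      have hs : (2*C+3).choose (C+2) = A := by
        rw [hAdef, ← Nat.choose_symm (show C+2 ≤ 2*C+3 by omega),
            show 2*C+3 - (C+2) = C+1 by omega]
      have : Nat.centralBinom (C+2) = (2*C+3+1).choose (C+1+1) := by
        unfold Nat.centralBinom; congr 1
      rw [this, Nat.choose_succ_succ, hs, hAdef]; ring
    have key := cb_key C hC4
    have k3 : ((C+1)*(D+1)) * ((C+1)*(D+1)) ≤ ((3*C+5)*(C+3)) * ((3*C+5)*(C+3)) :=
      Nat.mul_le_mul k2 k2
    have kfin : (C+1)^2 * Nat.centralBinom (C+2) ≤ ((3*C+5)*(C+3))^2 := by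
      rw [cb, ← f3]
      nlinarith [k3]
    omega
end

section
/- Let c, d be natural numbers with c ≥ 2 and d ≥ 1 such that C(d, 2) = C(2c−1, c−1), and suppose the integer g := C(d−1, 2) − C(2c−1, c−2) satisfies 2·c·g ≤ (d−1)² + c·(d−1) (as an inequality of integers). Then d·(c−1) ≤ 3c² + 2c − 1. -/
/-- The intermediate bound in the proof of the classification theorem:
from `C(d,2) = C(2c−1,c−1)` and `2·c·g ≤ (d−1)² + c·(d−1)`, where
`g := C(d−1,2) − C(2c−1,c−2)` as an integer, one deduces `d·(c−1) ≤ 3c² + 2c − 1`. -/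
theorem classification_intermediate_bound (c d : ℕ) (hc : 2 ≤ c) (hd : 1 ≤ d)
    (h1 : Nat.choose d 2 = Nat.choose (2 * c - 1) (c - 1))
    (h2 : 2 * (c : ℤ) * ((Nat.choose (d - 1) 2 : ℤ) - (Nat.choose (2 * c - 1) (c - 2) : ℤ)) ≤
      ((d : ℤ) - 1) ^ 2 + (c : ℤ) * ((d : ℤ) - 1)) :
    d * (c - 1) ≤ 3 * c ^ 2 + 2 * c - 1 := by
  -- key binomial identities in ℕ
  have two_choose : ∀ n : ℕ, 2 * Nat.choose n 2 = n * (n - 1) := by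
    intro n
    rw [Nat.choose_two_right, Nat.mul_div_cancel']
    rcases Nat.even_or_odd n with h | h
    · exact Dvd.dvd.mul_right h.two_dvd _
    · rcases n with _ | m
      · simp
      · exact Dvd.dvd.mul_left (by simpa using (Nat.Odd.sub_odd h odd_one).two_dvd) _
  have hB : 2 * Nat.choose (2 * c - 1) (c - 1) = d * (d - 1) := by
    rw [← h1]; exact two_choose d
  have hG : 2 * Nat.choose (d - 1) 2 = (d - 1) * (d - 2) := two_choose (d - 1)
  have hAB : Nat.choose (2 * c - 1) (c - 1) * (c - 1) =
      Nat.choose (2 * c - 1) (c - 2) * (c + 1) := by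
    have h := Nat.choose_succ_right_eq (2 * c - 1) (c - 2)
    have e1 : c - 2 + 1 = c - 1 := by omega
    have e2 : 2 * c - 1 - (c - 2) = c + 1 := by omega
    rw [e1, e2] at h
    exact h
  -- move everything to ℤ
  have hBz : 2 * (Nat.choose (2 * c - 1) (c - 1) : ℤ) = (d : ℤ) * ((d : ℤ) - 1) := by
    have := congrArg (Nat.cast : ℕ → ℤ) hB
    push_cast [Nat.cast_sub hd] at this ⊢
    linarith [this]
  have hGz : 2 * (Nat.choose (d - 1) 2 : ℤ) = ((d : ℤ) - 1) * ((d : ℤ) - 2) := by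
    rcases Nat.eq_or_lt_of_le hd with h | h
    · simp [← h]
    · have h2d : 2 ≤ d := h
      have := congrArg (Nat.cast : ℕ → ℤ) hG
      push_cast [Nat.cast_sub hd, Nat.cast_sub h2d] at this ⊢
      linarith [this]
  have hABz : (Nat.choose (2 * c - 1) (c - 1) : ℤ) * ((c : ℤ) - 1) =
      (Nat.choose (2 * c - 1) (c - 2) : ℤ) * ((c : ℤ) + 1) := by
    have := congrArg (Nat.cast : ℕ → ℤ) hAB
    push_cast [Nat.cast_sub (by omega : 1 ≤ c)] at this ⊢
    linarith [this]
  have hgoal : (d : ℤ) * ((c : ℤ) - 1) ≤ 3 * (c : ℤ) ^ 2 + 2 * (c : ℤ) - 1 := by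
    set B := (Nat.choose (2 * c - 1) (c - 1) : ℤ)
    set A := (Nat.choose (2 * c - 1) (c - 2) : ℤ)
    set G := (Nat.choose (d - 1) 2 : ℤ)
    have hcz : (2 : ℤ) ≤ (c : ℤ) := by exact_mod_cast hc
    have hdz : (1 : ℤ) ≤ (d : ℤ) := by exact_mod_cast hd
    rcases eq_or_lt_of_le hdz with h | h
    · nlinarith
    · have hd2 : (2 : ℤ) ≤ (d : ℤ) := h
      -- multiply h2 by (c+1) > 0
      have hmul : ((c : ℤ) + 1) * (2 * (c : ℤ) * (G - A)) ≤
          ((c : ℤ) + 1) * (((d : ℤ) - 1) ^ 2 + (c : ℤ) * ((d : ℤ) - 1)) :=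
        mul_le_mul_of_nonneg_left h2 (by linarith)
      nlinarith [hmul, hBz, hGz, hABz, mul_pos (by linarith : (0:ℤ) < (d:ℤ) - 1)
        (by linarith : (0:ℤ) < (c:ℤ))]
  have hc1 : 1 ≤ c := by omega
  have h1c : 1 ≤ 3 * c ^ 2 + 2 * c := by nlinarith
  have hfin : ((d * (c - 1) : ℕ) : ℤ) ≤ ((3 * c ^ 2 + 2 * c - 1 : ℕ) : ℤ) := by
    push_cast [Nat.cast_sub hc1, Nat.cast_sub h1c]
    linarith
  exact_mod_cast hfin
end

section
/- For every real ε > 0 there exists a natural number c₀ such that for all natural numbers c ≥ c₀ and all natural numbers d, if C(d, 2) ≤ C(2c−1, c−1) then (d : ℝ) ≤ (1 + ε) · 2^c / (π·c)^{1/4}. -/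
open Real

lemma sqrt_pi_le_stirlingSeq (n : ℕ) : Real.sqrt Real.pi ≤ Stirling.stirlingSeq (n + 1) := by
  have h : Filter.Tendsto (Stirling.stirlingSeq ∘ Nat.succ) Filter.atTop
      (nhds (Real.sqrt Real.pi)) :=
    Stirling.tendsto_stirlingSeq_sqrt_pi.comp (Filter.tendsto_add_atTop_nat 1)
  exact Stirling.stirlingSeq'_antitone.le_of_tendsto h n

lemma central_binom_le_real (c : ℕ) (hc : 1 ≤ c) :
    (((2 * c).choose c : ℕ) : ℝ) ≤ 4 ^ c / Real.sqrt (Real.pi * c) := by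
  obtain ⟨k, rfl⟩ : ∃ k, c = k + 1 := ⟨c - 1, (Nat.succ_pred_eq_of_pos hc).symm⟩
  set c := k + 1 with hcdef
  set s := Stirling.stirlingSeq with hs
  have hsc : Real.sqrt Real.pi ≤ s c := sqrt_pi_le_stirlingSeq k
  have hs2c : s (2 * c) ≤ s c := by
    have : s (2 * k + 1 + 1) ≤ s (k + 1) :=
      Stirling.stirlingSeq'_antitone (show k ≤ 2 * k + 1 by omega)
    simpa [hcdef, show 2 * (k + 1) = 2 * k + 1 + 1 by ring] using this
  clear_value c
  have hπ : (0 : ℝ) < Real.sqrt Real.pi := Real.sqrt_pos.mpr Real.pi_pos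
  have hcR : (0 : ℝ) < (c : ℝ) := by positivity
  have hscpos : 0 < s c := lt_of_lt_of_le hπ hsc
  have hfac : ∀ m : ℕ, 0 < m → ((m.factorial : ℕ) : ℝ) =
      s m * (Real.sqrt (2 * m) * ((m : ℝ) / Real.exp 1) ^ m) := by
    intro m hm
    have hmR : (0 : ℝ) < (m : ℝ) := by exact_mod_cast hm
    have hden : (0 : ℝ) < Real.sqrt (2 * m) * ((m : ℝ) / Real.exp 1) ^ m := by positivity
    rw [hs, Stirling.stirlingSeq]
    field_simp
  have h2 := hfac (2 * c) (by omega)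
  have h1 := hfac c (by omega)
  have hsqrt4 : Real.sqrt (2 * ((2 * c : ℕ) : ℝ)) = 2 * Real.sqrt c := by
    push_cast
    rw [show (2 : ℝ) * (2 * c) = 2 ^ 2 * c by ring,
      Real.sqrt_mul (by positivity), Real.sqrt_sq (by norm_num)]
  have hsq2c : Real.sqrt (2 * (c : ℝ)) * Real.sqrt (2 * (c : ℝ)) = 2 * c :=
    Real.mul_self_sqrt (by positivity)
  have hπc : Real.sqrt (Real.pi * c) = Real.sqrt Real.pi * Real.sqrt c :=
    Real.sqrt_mul Real.pi_pos.le _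
  have hu : Real.sqrt (c : ℝ) * Real.sqrt (c : ℝ) = c := Real.mul_self_sqrt hcR.le
  have hpow : (((2 * c : ℕ) : ℝ) / Real.exp 1) ^ (2 * c)
      = 4 ^ c * (((c : ℝ) / Real.exp 1) ^ c) ^ 2 := by
    push_cast
    rw [show ((2 : ℝ) * c) / Real.exp 1 = 2 * ((c : ℝ) / Real.exp 1) by ring, mul_pow,
      ← pow_mul, show (2 : ℕ) * c = c * 2 by ring, pow_mul, pow_mul,
      ← pow_mul, mul_comm c 2, pow_mul]
    norm_num
  have hch : (((2 * c).choose c : ℕ) : ℝ) * ((c.factorial : ℝ) * (c.factorial : ℝ))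
      = ((2 * c).factorial : ℝ) := by
    have := Nat.choose_mul_factorial_mul_factorial (show c ≤ 2 * c by omega)
    rw [show 2 * c - c = c by omega] at this
    push_cast [← this]
    ring
  have hfp : (0 : ℝ) < (c.factorial : ℝ) := by exact_mod_cast c.factorial_pos
  have hπcpos : (0 : ℝ) < Real.sqrt (Real.pi * c) := Real.sqrt_pos.mpr (by positivity)
  have hub : s (2 * c) * Real.sqrt Real.pi ≤ s c * s c := by nlinarith
  have hdiv : (((2 * c).choose c : ℕ) : ℝ)
      = ((2 * c).factorial : ℝ) / ((c.factorial : ℝ) * (c.factorial : ℝ)) := by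
    rw [eq_div_iff (by positivity)]; exact hch
  rw [hdiv, div_le_div_iff₀ (by positivity) hπcpos]
  set X := ((c : ℝ) / Real.exp 1) ^ c with hX
  calc ((2 * c).factorial : ℝ) * Real.sqrt (Real.pi * c)
      = (s (2 * c) * Real.sqrt Real.pi)
        * (2 * (Real.sqrt c * Real.sqrt c) * (4 ^ c * X ^ 2)) := by
        rw [h2, hπc, hsqrt4, hpow]; ring
    _ = (s (2 * c) * Real.sqrt Real.pi) * (2 * (c : ℝ) * (4 ^ c * X ^ 2)) := by rw [hu]
    _ ≤ (s c * s c) * (2 * (c : ℝ) * (4 ^ c * X ^ 2)) := by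
        apply mul_le_mul_of_nonneg_right hub
        positivity
    _ = (s c * s c) * ((Real.sqrt (2 * (c : ℝ)) * Real.sqrt (2 * (c : ℝ)))
          * (4 ^ c * X ^ 2)) := by rw [hsq2c]
    _ = 4 ^ c * ((c.factorial : ℝ) * (c.factorial : ℝ)) := by rw [h1]; ring

lemma two_mul_choose_eq (c : ℕ) (hc : 1 ≤ c) :
    2 * Nat.choose (2 * c - 1) (c - 1) = Nat.choose (2 * c) c := by
  obtain ⟨k, rfl⟩ : ∃ k, c = k + 1 := ⟨c - 1, (Nat.succ_pred_eq_of_pos hc).symm⟩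
  have h1 : (2 * k + 1).choose (k + 1) = (2 * k + 1).choose k := by
    have := Nat.choose_symm (show k + 1 ≤ 2 * k + 1 by omega)
    rw [show 2 * k + 1 - (k + 1) = k by omega] at this
    omega
  have h2 : (2 * (k + 1)).choose (k + 1) = (2 * k + 1).choose k + (2 * k + 1).choose (k + 1) := by
    rw [show 2 * (k + 1) = (2 * k + 1) + 1 by ring]
    exact Nat.choose_succ_succ _ _
  simp only [show 2 * (k + 1) - 1 = 2 * k + 1 by omega, Nat.add_sub_cancel]
  omega

lemma mul_pred_le (d c : ℕ) (hc : 1 ≤ c)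
    (h : Nat.choose d 2 ≤ Nat.choose (2 * c - 1) (c - 1)) :
    d * (d - 1) ≤ Nat.choose (2 * c) c := by
  have e1 : d * (d - 1) = 2 * d.choose 2 := by
    rcases d with _ | e
    · simp
    · rw [Nat.choose_two_right, Nat.succ_sub_one]
      have hev : Even ((e + 1) * e) := by simpa [mul_comm] using Nat.even_mul_succ_self e
      rw [Nat.mul_div_cancel' hev.two_dvd]
  rw [e1, ← two_mul_choose_eq c hc]
  omega

/-- The bound `C(d,2) ≤ C(2c−1,c−1)` gives asymptotically
`d ≤ 2^c / (π·c)^{1/4}`. -/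
theorem asymptotic_degree_bound_eps :
    ∀ ε : ℝ, 0 < ε → ∃ c₀ : ℕ, ∀ c : ℕ, c₀ ≤ c → ∀ d : ℕ,
      Nat.choose d 2 ≤ Nat.choose (2 * c - 1) (c - 1) →
        (d : ℝ) ≤ (1 + ε) * 2 ^ c / (Real.pi * c) ^ ((1 : ℝ) / 4) := by
  intro ε hε
  have hlim : Filter.Tendsto (fun n : ℕ => (n : ℝ) * (1 / 2) ^ n) Filter.atTop (nhds 0) :=
    tendsto_self_mul_const_pow_of_lt_one (by norm_num) (by norm_num)
  have hev : ∀ᶠ c : ℕ in Filter.atTop, (c : ℝ) * (1 / 2) ^ c < ε / 4 :=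
    hlim.eventually_lt_const (by positivity)
  obtain ⟨c₀, hc₀⟩ := Filter.eventually_atTop.mp (hev.and (Filter.eventually_ge_atTop 1))
  refine ⟨c₀, fun c hc d hd => ?_⟩
  obtain ⟨hsmall, hc1⟩ := hc₀ c hc
  have hcR : (0 : ℝ) < (c : ℝ) := by exact_mod_cast hc1
  have hπc0 : (0 : ℝ) < Real.pi * c := by positivity
  set X := (Real.pi * (c : ℝ)) ^ ((1 : ℝ) / 4) with hXdef
  have hX0 : 0 < X := Real.rpow_pos_of_pos hπc0 _
  have hp2 : (0 : ℝ) < 2 ^ c := by positivity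
  -- X ≤ ε * 2 ^ c
  have hx1 : ((1 : ℝ) / 2) ^ c * 2 ^ c = 1 := by
    rw [← mul_pow]; norm_num
  have hc4 : (c : ℝ) < ε / 4 * 2 ^ c := by
    have h1 : (c : ℝ) * (1 / 2) ^ c * 2 ^ c < ε / 4 * 2 ^ c :=
      mul_lt_mul_of_pos_right hsmall hp2
    calc (c : ℝ) = (c : ℝ) * ((1 / 2) ^ c * 2 ^ c) := by rw [hx1, mul_one]
      _ = (c : ℝ) * (1 / 2) ^ c * 2 ^ c := by ring
      _ < ε / 4 * 2 ^ c := h1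
  have hεB : X ≤ ε * 2 ^ c := by
    have h1 : X ≤ Real.pi * c := by
      have := Real.rpow_le_rpow_of_exponent_le
        (show (1 : ℝ) ≤ Real.pi * c by nlinarith [Real.pi_gt_three, show (1:ℝ) ≤ (c:ℝ) from by exact_mod_cast hc1])
        (show (1 : ℝ) / 4 ≤ 1 by norm_num)
      rwa [Real.rpow_one] at this
    have h2 : Real.pi * c ≤ 4 * c :=
      mul_le_mul_of_nonneg_right Real.pi_le_four hcR.le
    nlinarith
  -- (2^c / X)^2 = 4^c / √(π c)
  have hX2 : X ^ 2 = Real.sqrt (Real.pi * c) := by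
    rw [hXdef, ← Real.rpow_natCast _ 2, ← Real.rpow_mul hπc0.le, Real.sqrt_eq_rpow]
    norm_num
  have hB2 : ((2 : ℝ) ^ c / X) ^ 2 = 4 ^ c / Real.sqrt (Real.pi * c) := by
    rw [div_pow, hX2, ← pow_mul, mul_comm c 2, pow_mul]
    norm_num
  rcases Nat.eq_zero_or_pos d with rfl | hd1
  · simp only [Nat.cast_zero]
    positivity
  · have hnat := mul_pred_le d c hc1 hd
    have hdd : (d : ℝ) * ((d : ℝ) - 1) ≤ ((2 : ℝ) ^ c / X) ^ 2 := by
      rw [hB2]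
      calc (d : ℝ) * ((d : ℝ) - 1) = ((d * (d - 1) : ℕ) : ℝ) := by
            push_cast [Nat.cast_sub hd1]; ring
        _ ≤ (((2 * c).choose c : ℕ) : ℝ) := by exact_mod_cast hnat
        _ ≤ 4 ^ c / Real.sqrt (Real.pi * c) := central_binom_le_real c hc1
    have hdR : (1 : ℝ) ≤ (d : ℝ) := by exact_mod_cast hd1
    have hQ : (0 : ℝ) < 2 ^ c / X := by positivity
    have h9 : (d : ℝ) - 1 ≤ 2 ^ c / X := by nlinarith
    have h10 : (1 : ℝ) ≤ ε * 2 ^ c / X := by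
      rw [le_div_iff₀ hX0, one_mul]; exact hεB
    have heq : (1 + ε) * 2 ^ c / X = 2 ^ c / X + ε * 2 ^ c / X := by ring
    rw [heq]
    linarith
end
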